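/- arXiv:1312.0666 — 3 statements merged into one kernel-verified Lean document; each statement's English description precedes it below -/
import Mathlib

section
/- For any positive sequence (ε_k) tending to 0, there exists a sequence (n_k) of positive integers with n_{k+1}/n_k ≥ 1 + ε_k for all k ≥ k_0, and a permutation σ of the positive integers, such that the permuted central limit theorem fails: it is not the case that λ{x ∈ (0,1) : ∑_{k=1}^N cos(2π n_{σ(k)} x) ≤ t √(N/2)} converges to the standard normal distribution function for all t. -/
open MeasureTheory Filter Set Real Topology

/-!
Cut `ℕ` into consecutive chunks. A chunk starting at `s` consists of indices `k` with
`n k = 2 ^ k`, followed, from an index `K` beyond which `ε < 1 / (2A + 1)`, by a block of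
`A = 8 (s + 1) ^ 2` frequencies `(A + i) 2 ^ K` in arithmetic progression; the gap condition
then holds as soon as `ε < 1`. The permutation moves each block to the front of its chunk.
After `N = s + A` rearranged terms, the first `s` terms contribute at most `s`, and the block is
a Dirichlet-kernel sum bounded by `1 / |sin (π 2 ^ K x)|`. Outside a set of measure at most
`2 / (s + 1)` the partial sum is therefore at most `2 s + 1 ≤ √(N / 2)`, so along these `N` the
distribution functions at `t = 1` tend to `1`, which exceeds `Φ(1)`.
-/

lemma abs_sum_cos_mul_abs_sin_le (a θ : ℝ) (L : ℕ) :
    |∑ i ∈ Finset.range L, cos (a + i * θ)| * |sin (θ / 2)| ≤ 1 := by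
  set f : ℕ → ℝ := fun i => sin (a + i * θ - θ / 2)
  have telescope : 2 * sin (θ / 2) * ∑ i ∈ Finset.range L, cos (a + i * θ) = f L - f 0 := by
    rw [← Finset.sum_range_sub, Finset.mul_sum]
    refine Finset.sum_congr rfl fun i _ => ?_
    rw [two_mul_sin_mul_cos, show θ / 2 - (a + i * θ) = -(a + i * θ - θ / 2) by ring, sin_neg]
    simp only [f]
    push_cast
    ring_nf
  have hbound : |f L - f 0| ≤ 2 := by
    have h1 : |f L| ≤ 1 := abs_sin_le_one _
    have h0 : |f 0| ≤ 1 := abs_sin_le_one _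
    linarith [abs_sub (f L) (f 0)]
  rw [← telescope, abs_mul, abs_mul, abs_two] at hbound
  linarith

lemma sum_cos_arith_le (M D L : ℕ) {x b : ℝ} (hb : 0 < b) (hx : 1 / b ≤ |sin (π * D * x)|) :
    ∑ i ∈ Finset.range L, cos (2 * π * ((M + i) * D : ℕ) * x) ≤ b := by
  have hdir := abs_sum_cos_mul_abs_sin_le (2 * π * M * D * x) (2 * π * D * x) L
  rw [show 2 * π * D * x / 2 = π * D * x by ring] at hdir
  have hsin : 0 < |sin (π * D * x)| := (by positivity : (0 : ℝ) < 1 / b).trans_le hx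
  calc ∑ i ∈ Finset.range L, cos (2 * π * ((M + i) * D : ℕ) * x)
      = ∑ i ∈ Finset.range L, cos (2 * π * M * D * x + i * (2 * π * D * x)) :=
        Finset.sum_congr rfl fun i _ => by push_cast; ring_nf
    _ ≤ 1 / |sin (π * D * x)| := (le_abs_self _).trans ((le_div_iff₀ hsin).2 hdir)
    _ ≤ b := (one_div_le hsin hb).2 hx

lemma two_mul_abs_sub_round_le_abs_sin (y : ℝ) : 2 * |y - round y| ≤ |sin (π * y)| := by
  have hπ := pi_pos
  have hsin : |sin (π * y)| = |sin (π * (y - round y))| := by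
    rw [mul_sub, mul_comm π (round y : ℝ), sin_sub_int_mul_pi, abs_mul, abs_neg_one_zpow,
      one_mul]
  have hjordan := mul_abs_le_abs_sin (x := π * (y - round y))
    (by rw [abs_mul, abs_of_pos hπ]; nlinarith [abs_sub_round y])
  rw [abs_mul, abs_of_pos hπ, ← mul_assoc, div_mul_cancel₀ _ hπ.ne'] at hjordan
  rwa [hsin]

lemma volume_abs_sin_pi_mul_lt_le {D : ℕ} (hD : 0 < D) {δ : ℝ} (hδ : 0 < δ) :
    volume {x ∈ Ioo (0 : ℝ) 1 | |sin (π * D * x)| < δ} ≤ ENNReal.ofReal (2 * δ) := by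
  have hDR : (0 : ℝ) < D := by exact_mod_cast hD
  have hcover : {x ∈ Ioo (0 : ℝ) 1 | |sin (π * D * x)| < δ} ⊆
      ⋃ m ∈ Finset.range (D + 1), Metric.ball ((m : ℝ) / D) (δ / (2 * D)) := by
    rintro x ⟨⟨hx0, hx1⟩, hx⟩
    set m := round ((D : ℝ) * x)
    have hm := abs_sub_le_iff.1 (abs_sub_round ((D : ℝ) * x))
    have hclose : 2 * |D * x - m| < δ :=
      (two_mul_abs_sub_round_le_abs_sin _).trans_lt (by rwa [← mul_assoc])
    have hm0 : (-1 : ℝ) < m := by nlinarith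
    have hmD : (m : ℝ) < D + 1 := by nlinarith
    have hm0' : 0 ≤ m := by
      have : (-1 : ℤ) < m := by exact_mod_cast hm0
      omega
    have hmD' : m < D + 1 := by exact_mod_cast hmD
    refine mem_biUnion (x := m.toNat) (Finset.mem_range.2 (by omega)) ?_
    rw [Metric.mem_ball, dist_eq,
      show ((m.toNat : ℕ) : ℝ) = m by exact_mod_cast Int.toNat_of_nonneg hm0',
      show x - m / D = (D * x - m) / D by field_simp, abs_div, abs_of_pos hDR,
      div_lt_div_iff₀ hDR (by positivity)]
    nlinarith
  calc volume {x ∈ Ioo (0 : ℝ) 1 | |sin (π * D * x)| < δ}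
      ≤ ∑ m ∈ Finset.range (D + 1), volume (Metric.ball ((m : ℝ) / D) (δ / (2 * D))) :=
        (measure_mono hcover).trans (measure_biUnion_finset_le _ _)
    _ = ENNReal.ofReal ((D + 1) * (δ / D)) := by
        simp_rw [Real.volume_ball, show 2 * (δ / (2 * D)) = δ / D by field_simp]
        rw [Finset.sum_const, Finset.card_range, nsmul_eq_mul, ENNReal.ofReal_mul (by positivity),
          ← Nat.cast_succ, ENNReal.ofReal_natCast]
    _ ≤ ENNReal.ofReal (2 * δ) := by
        refine ENNReal.ofReal_le_ofReal ?_
        rw [mul_div_assoc', div_le_iff₀ hDR]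
        have : (1 : ℝ) ≤ D := by exact_mod_cast hD
        nlinarith

lemma one_sub_le_volume_Ioo_sep {p q : ℝ → Prop} {η : ℝ} (hη : 0 ≤ η)
    (hpq : ∀ x ∈ Ioo (0 : ℝ) 1, p x ∨ q x)
    (hq : volume {x ∈ Ioo (0 : ℝ) 1 | q x} ≤ ENNReal.ofReal η) :
    1 - η ≤ (volume {x ∈ Ioo (0 : ℝ) 1 | p x}).toReal := by
  set P := {x ∈ Ioo (0 : ℝ) 1 | p x}
  set Q := {x ∈ Ioo (0 : ℝ) 1 | q x}
  have hfin : volume (P ∪ Q) ≠ ⊤ :=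
    measure_ne_top_of_subset (union_subset (sep_subset _ _) (sep_subset _ _)) (by simp)
  calc 1 - η = volume.real (Ioo (0 : ℝ) 1) - η := by simp
    _ ≤ volume.real (P ∪ Q) - η := by
        gcongr
        exact fun x hx => (hpq x hx).imp (⟨hx, ·⟩) (⟨hx, ·⟩)
    _ ≤ volume.real P + volume.real Q - η := by gcongr; exact measureReal_union_le P Q
    _ ≤ volume.real P := by
        have hQ : volume.real Q ≤ η := ENNReal.toReal_le_of_le_ofReal hη hq
        linarith

lemma toReal_volume_Ioo_sep_le_one (p : ℝ → Prop) :
    (volume {x ∈ Ioo (0 : ℝ) 1 | p x}).toReal ≤ 1 :=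
  ENNReal.toReal_le_of_le_ofReal zero_le_one
    ((measure_mono (sep_subset _ _)).trans (by simp))

open ProbabilityTheory in
lemma gaussian_cdf_lt_one (t : ℝ) : (√(2 * π))⁻¹ * ∫ u in Iic t, exp (-u ^ 2 / 2) < 1 := by
  have hpdf : ∀ u, gaussianPDFReal 0 1 u = (√(2 * π))⁻¹ * exp (-u ^ 2 / 2) := by
    simp [gaussianPDFReal_def]
  have hint := integrable_gaussianPDFReal 0 1
  have hpos u : 0 < gaussianPDFReal 0 1 u := gaussianPDFReal_pos 0 1 u one_ne_zero
  have htail : 0 < ∫ u in Ioi t, gaussianPDFReal 0 1 u := by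
    rw [setIntegral_pos_iff_support_of_nonneg_ae (ae_of_all _ fun u => (hpos u).le)
      hint.integrableOn, Function.support_eq_univ fun u => (hpos u).ne', univ_inter]
    simp
  rw [← integral_const_mul]
  simp_rw [← hpdf]
  rw [← integral_gaussianPDFReal_eq_one 0 one_ne_zero,
    ← intervalIntegral.integral_Iic_add_Ioi hint.integrableOn hint.integrableOn]
  linarith

lemma four_mul_le_two_pow {A : ℕ} (hA : 4 ≤ A) : 4 * A ≤ 2 ^ A := by
  induction A, hA using Nat.le_induction with
  | base => norm_num
  | succ A hA ih => rw [pow_succ]; omega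

lemma one_add_mul_le_of_nat_mul_le {m a b : ℕ} {ε : ℝ} (hε : ε ≤ 1 / (m + 1))
    (h : (m + 2) * a ≤ (m + 1) * b) : (1 + ε) * a ≤ b := by
  have hm : (0 : ℝ) < m + 1 := by positivity
  have h' : ((m : ℝ) + 2) * a ≤ (m + 1) * b := by exact_mod_cast h
  calc (1 + ε) * a ≤ (1 + 1 / (m + 1)) * a := by gcongr
    _ = ((m : ℝ) + 2) * a / (m + 1) := by field_simp; ring
    _ ≤ b := by rw [div_le_iff₀ hm]; linarith

namespace GapCounterexample

-- Large enough that `√(N / 2) ≥ 2 (s + 1)` at the checkpoint `N = s + blockLen s`.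
def blockLen (s : ℕ) : ℕ := 8 * (s + 1) ^ 2

variable (φ : ℕ → ℕ)

-- `φ m` stands for an index beyond which `ε < 1 / (m + 1)`: inside the block the ratios
-- `1 + 1 / (blockLen s + i)` are at least `1 + 1 / (2 blockLen s + 1)`.
def blockStart (s : ℕ) : ℕ := max (s + 1) (φ (2 * blockLen s))

def chunkStart : ℕ → ℕ
  | 0 => 0
  | j + 1 => blockStart φ (chunkStart j) + blockLen (chunkStart j)

lemma four_le_blockLen (s : ℕ) : 4 ≤ blockLen s := by
  have : 1 ≤ (s + 1) ^ 2 := Nat.one_le_pow _ _ s.succ_pos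
  unfold blockLen; omega

lemma lt_blockStart (s : ℕ) : s < blockStart φ s := Nat.lt_of_succ_le (le_max_left _ _)

lemma chunkStart_succ (j : ℕ) :
    chunkStart φ (j + 1) = blockStart φ (chunkStart φ j) + blockLen (chunkStart φ j) := rfl

lemma chunkStart_strictMono : StrictMono (chunkStart φ) :=
  strictMono_nat_of_lt_succ fun j => by
    have := lt_blockStart φ (chunkStart φ j)
    rw [chunkStart_succ]; omega

def chunkIdx (k : ℕ) : ℕ := Nat.findGreatest (fun j => chunkStart φ j ≤ k) k

lemma chunkStart_chunkIdx_le (k : ℕ) : chunkStart φ (chunkIdx φ k) ≤ k :=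
  Nat.findGreatest_spec (P := fun j => chunkStart φ j ≤ k) (Nat.zero_le _) (Nat.zero_le _)

lemma lt_chunkStart_chunkIdx_succ (k : ℕ) : k < chunkStart φ (chunkIdx φ k + 1) := by
  by_contra! h
  have := Nat.le_findGreatest (P := fun j => chunkStart φ j ≤ k)
    (((chunkStart_strictMono φ).id_le _).trans h) h
  exact (chunkIdx φ k).lt_succ_self.not_ge this

lemma chunkIdx_eq {j k : ℕ} (h₁ : chunkStart φ j ≤ k) (h₂ : k < chunkStart φ (j + 1)) :
    chunkIdx φ k = j := by
  have hmono := (chunkStart_strictMono φ).monotone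
  have := chunkStart_chunkIdx_le φ k
  have := lt_chunkStart_chunkIdx_succ φ k
  refine le_antisymm ?_ ?_ <;> by_contra! h
  · have := hmono (show j + 1 ≤ chunkIdx φ k by omega); omega
  · have := hmono (show chunkIdx φ k + 1 ≤ j by omega); omega

def onChunks (g : ℕ → ℕ → ℕ) (k : ℕ) : ℕ := g (chunkStart φ (chunkIdx φ k)) k

lemma onChunks_of_mem (g : ℕ → ℕ → ℕ) {j k : ℕ} (h₁ : chunkStart φ j ≤ k)
    (h₂ : k < chunkStart φ (j + 1)) : onChunks φ g k = g (chunkStart φ j) k := by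
  rw [onChunks, chunkIdx_eq φ h₁ h₂]

lemma onChunks_onChunks {f g : ℕ → ℕ → ℕ}
    (hf : ∀ s k, s ≤ k → k < blockStart φ s + blockLen s →
      s ≤ f s k ∧ f s k < blockStart φ s + blockLen s)
    (hgf : ∀ s k, s ≤ k → k < blockStart φ s + blockLen s → g s (f s k) = k) (k : ℕ) :
    onChunks φ g (onChunks φ f k) = k := by
  have h₁ := chunkStart_chunkIdx_le φ k
  have h₂ := lt_chunkStart_chunkIdx_succ φ k
  rw [chunkStart_succ] at h₂
  obtain ⟨hf₁, hf₂⟩ := hf _ k h₁ h₂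
  rw [show onChunks φ f k = f _ k from rfl,
    onChunks_of_mem φ g hf₁ (by rwa [chunkStart_succ])]
  exact hgf _ k h₁ h₂

def frontBlock (s k : ℕ) : ℕ :=
  if k < s + blockLen s then k - s + blockStart φ s else k - blockLen s

def frontBlockInv (s k : ℕ) : ℕ :=
  if k < blockStart φ s then k + blockLen s else k - blockStart φ s + s

def rearrangement : Equiv.Perm ℕ where
  toFun := onChunks φ (frontBlock φ)
  invFun := onChunks φ (frontBlockInv φ)
  left_inv := onChunks_onChunks φ
    (fun s k _ _ => by have := lt_blockStart φ s; unfold frontBlock; split_ifs <;> omega)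
    (fun s k _ _ => by
      have := lt_blockStart φ s; unfold frontBlock frontBlockInv; split_ifs <;> omega)
  right_inv := onChunks_onChunks φ
    (fun s k _ _ => by have := lt_blockStart φ s; unfold frontBlockInv; split_ifs <;> omega)
    (fun s k _ _ => by
      have := lt_blockStart φ s; unfold frontBlock frontBlockInv; split_ifs <;> omega)

lemma rearrangement_chunkStart_add {j i : ℕ} (hi : i < blockLen (chunkStart φ j)) :
    rearrangement φ (chunkStart φ j + i) = blockStart φ (chunkStart φ j) + i := by
  have := lt_blockStart φ (chunkStart φ j)
  change onChunks φ (frontBlock φ) _ = _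
  rw [onChunks_of_mem φ _ (Nat.le_add_right _ _) (by rw [chunkStart_succ]; omega), frontBlock,
    if_pos (by omega)]
  omega

def dyadicThenBlock (s k : ℕ) : ℕ :=
  if k < blockStart φ s then 2 ^ k else (blockLen s + (k - blockStart φ s)) * 2 ^ blockStart φ s

def freq : ℕ → ℕ := onChunks φ (dyadicThenBlock φ)

lemma freq_pos (k : ℕ) : 0 < freq φ k := by
  have := four_le_blockLen (chunkStart φ (chunkIdx φ k))
  unfold freq onChunks dyadicThenBlock
  split_ifs <;> positivity

lemma freq_of_lt_blockStart {j k : ℕ} (h₁ : chunkStart φ j ≤ k)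
    (h₂ : k < blockStart φ (chunkStart φ j)) : freq φ k = 2 ^ k := by
  rw [freq, onChunks_of_mem φ _ h₁ (by rw [chunkStart_succ]; omega), dyadicThenBlock,
    if_pos h₂]

lemma freq_blockStart_add {j i : ℕ} (hi : i < blockLen (chunkStart φ j)) :
    freq φ (blockStart φ (chunkStart φ j) + i) =
      (blockLen (chunkStart φ j) + i) * 2 ^ blockStart φ (chunkStart φ j) := by
  have := lt_blockStart φ (chunkStart φ j)
  rw [freq, onChunks_of_mem φ _ (j := j) (by omega) (by rw [chunkStart_succ]; omega),
    dyadicThenBlock, if_neg (by omega), Nat.add_sub_cancel_left]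

lemma two_mul_freq_le_freq_succ {k : ℕ}
    (hk : k < blockStart φ (chunkStart φ (chunkIdx φ k))) :
    2 * freq φ k ≤ freq φ (k + 1) := by
  set j := chunkIdx φ k
  have h₁ : chunkStart φ j ≤ k := chunkStart_chunkIdx_le φ k
  rw [freq_of_lt_blockStart φ h₁ hk, ← pow_succ']
  rcases (show k + 1 ≤ _ from hk).lt_or_eq with hlt | heq
  · rw [freq_of_lt_blockStart φ (j := j) (by omega) hlt]
  · have hA := four_le_blockLen (chunkStart φ j)
    have hK := freq_blockStart_add φ (j := j) (i := 0) (by omega)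
    rw [add_zero, add_zero] at hK
    rw [heq, hK]
    exact Nat.le_mul_of_pos_left _ (by omega)

lemma freq_succ_of_blockStart_le {k : ℕ}
    (hk : blockStart φ (chunkStart φ (chunkIdx φ k)) ≤ k) :
    (2 * blockLen (chunkStart φ (chunkIdx φ k)) + 2) * freq φ k ≤
      (2 * blockLen (chunkStart φ (chunkIdx φ k)) + 1) * freq φ (k + 1) := by
  set j := chunkIdx φ k
  set A := blockLen (chunkStart φ j) with hA
  set K := blockStart φ (chunkStart φ j) with hK
  have h₂ : k < K + A := chunkStart_succ φ j ▸ lt_chunkStart_chunkIdx_succ φ k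
  obtain ⟨i, hi⟩ := Nat.exists_eq_add_of_le hk
  rw [hi, freq_blockStart_add φ (by omega)]
  rcases (show K + i + 1 ≤ K + A by omega).lt_or_eq with hlt | heq
  · rw [add_assoc, freq_blockStart_add φ (by omega), ← mul_assoc, ← mul_assoc]
    gcongr ?_ * _
    nlinarith
  · rw [heq, ← chunkStart_succ, freq_of_lt_blockStart φ le_rfl (lt_blockStart φ _),
      chunkStart_succ, pow_add, ← hA, ← hK]
    have hiA : i + 1 = A := by omega
    have hnum : (2 * A + 2) * (A + i) ≤ (2 * A + 1) * 2 ^ A :=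
      calc (2 * A + 2) * (A + i) ≤ (2 * A + 1) * (4 * A) := by nlinarith
        _ ≤ (2 * A + 1) * 2 ^ A :=
          Nat.mul_le_mul_left _ (four_mul_le_two_pow (four_le_blockLen _))
    calc (2 * A + 2) * ((A + i) * 2 ^ K) = (2 * A + 2) * (A + i) * 2 ^ K := by ring
      _ ≤ (2 * A + 1) * 2 ^ A * 2 ^ K := Nat.mul_le_mul_right _ hnum
      _ = (2 * A + 1) * (2 ^ K * 2 ^ A) := by ring

lemma freq_gap {ε : ℕ → ℝ} (hφ : ∀ m : ℕ, ∀ k ≥ φ m, ε k < 1 / (m + 1)) {k : ℕ}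
    (hk : φ 0 ≤ k) : (1 + ε k) * freq φ k ≤ freq φ (k + 1) := by
  by_cases hK : k < blockStart φ (chunkStart φ (chunkIdx φ k))
  · exact one_add_mul_le_of_nat_mul_le (m := 0) (by simpa using (hφ 0 k hk).le)
      (by simpa using two_mul_freq_le_freq_succ φ hK)
  · push Not at hK
    exact one_add_mul_le_of_nat_mul_le (hφ _ k ((le_max_right _ _).trans hK)).le
      (freq_succ_of_blockStart_le φ hK)

def checkpoint (j : ℕ) : ℕ := chunkStart φ j + blockLen (chunkStart φ j)

lemma checkpoint_strictMono : StrictMono (checkpoint φ) :=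
  strictMono_nat_of_lt_succ fun j => by
    have := lt_blockStart φ (chunkStart φ j)
    unfold checkpoint
    rw [chunkStart_succ]
    omega

lemma freq_rearrangement_chunkStart_add {j i : ℕ} (hi : i < blockLen (chunkStart φ j)) :
    freq φ (rearrangement φ (chunkStart φ j + i)) =
      (blockLen (chunkStart φ j) + i) * 2 ^ blockStart φ (chunkStart φ j) := by
  rw [rearrangement_chunkStart_add φ hi, freq_blockStart_add φ hi]

lemma sum_cos_rearranged_le {j : ℕ} {x : ℝ}
    (hx : 1 / (chunkStart φ j + 1 : ℝ) ≤
      |sin (π * (2 ^ blockStart φ (chunkStart φ j) : ℕ) * x)|) :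
    ∑ k ∈ Finset.range (checkpoint φ j), cos (2 * π * (freq φ (rearrangement φ k) : ℝ) * x) ≤
      √((checkpoint φ j : ℝ) / 2) := by
  have hhead : ∑ k ∈ Finset.range (chunkStart φ j),
      cos (2 * π * (freq φ (rearrangement φ k) : ℝ) * x) ≤ chunkStart φ j :=
    (Finset.sum_le_sum fun _ _ => cos_le_one _).trans (by simp)
  have hblock : ∑ i ∈ Finset.range (blockLen (chunkStart φ j)),
      cos (2 * π * (freq φ (rearrangement φ (chunkStart φ j + i)) : ℝ) * x) ≤
        chunkStart φ j + 1 := by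
    rw [Finset.sum_congr rfl fun i hi => congrArg (fun n : ℕ => cos (2 * π * (n : ℝ) * x))
      (freq_rearrangement_chunkStart_add φ (Finset.mem_range.1 hi))]
    exact sum_cos_arith_le _ _ _ (by positivity) hx
  calc _ = _ + _ := Finset.sum_range_add _ _ _
    _ ≤ (chunkStart φ j : ℝ) + (chunkStart φ j + 1) := add_le_add hhead hblock
    _ ≤ √((checkpoint φ j : ℝ) / 2) := by
      rw [Real.le_sqrt (by positivity) (by positivity), checkpoint, blockLen]
      push_cast
      nlinarith

lemma one_sub_le_volume_sum_cos_rearranged_le (j : ℕ) :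
    1 - 2 / (chunkStart φ j + 1 : ℝ) ≤
      (volume {x ∈ Ioo (0 : ℝ) 1 | ∑ k ∈ Finset.range (checkpoint φ j),
        cos (2 * π * (freq φ (rearrangement φ k) : ℝ) * x) ≤
          √((checkpoint φ j : ℝ) / 2)}).toReal := by
  refine one_sub_le_volume_Ioo_sep (by positivity) (fun x _ => ?_)
    ((volume_abs_sin_pi_mul_lt_le (D := 2 ^ blockStart φ (chunkStart φ j)) (by positivity)
      (δ := 1 / (chunkStart φ j + 1)) (by positivity)).trans_eq (by ring_nf))
  exact (le_or_gt _ _).imp (sum_cos_rearranged_le φ) id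

lemma tendsto_volume_sum_cos_rearranged_le :
    Tendsto (fun j => (volume {x ∈ Ioo (0 : ℝ) 1 | ∑ k ∈ Finset.range (checkpoint φ j),
      cos (2 * π * (freq φ (rearrangement φ k) : ℝ) * x) ≤
        √((checkpoint φ j : ℝ) / 2)}).toReal) atTop (𝓝 1) := by
  have hs : Tendsto (fun j => (chunkStart φ j : ℝ) + 1) atTop atTop :=
    tendsto_atTop_add_const_right _ 1
      (tendsto_natCast_atTop_atTop.comp (chunkStart_strictMono φ).tendsto_atTop)
  have hlower : Tendsto (fun j => 1 - 2 / ((chunkStart φ j : ℝ) + 1)) atTop (𝓝 1) := by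
    simpa using tendsto_const_nhds.sub (tendsto_const_nhds (x := (2 : ℝ)).div_atTop hs)
  exact tendsto_of_tendsto_of_tendsto_of_le_of_le hlower tendsto_const_nhds
    (one_sub_le_volume_sum_cos_rearranged_le φ) fun _ => toReal_volume_Ioo_sep_le_one _

end GapCounterexample

open GapCounterexample in
theorem permuted_clt_fails_below_hadamard_general
    (ε : ℕ → ℝ) (hε0 : Tendsto ε atTop (𝓝 0)) :
    ∃ (n : ℕ → ℕ) (k₀ : ℕ) (σ : Equiv.Perm ℕ),
      (∀ k, 0 < n k) ∧
      (∀ k ≥ k₀, (1 + ε k) * (n k : ℝ) ≤ (n (k + 1) : ℝ)) ∧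
      ¬ (∀ t : ℝ,
          Tendsto
            (fun N : ℕ =>
              (volume {x ∈ Ioo (0 : ℝ) 1 |
                ∑ k ∈ Finset.range N, Real.cos (2 * π * (n (σ k) : ℝ) * x)
                  ≤ t * Real.sqrt ((N : ℝ) / 2)}).toReal)
            atTop
            (𝓝 ((Real.sqrt (2 * π))⁻¹ * ∫ u in Iic t, Real.exp (-u ^ 2 / 2)))) := by
  choose φ hφ using fun m : ℕ =>
    eventually_atTop.1 (hε0.eventually_lt_const (Nat.one_div_pos_of_nat (n := m)))
  refine ⟨freq φ, φ 0, rearrangement φ, freq_pos φ, fun k hk => freq_gap φ hφ hk,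
    fun hclt => ?_⟩
  have hsub := (hclt 1).comp (checkpoint_strictMono φ).tendsto_atTop
  simp only [Function.comp_def, one_mul] at hsub
  exact (gaussian_cdf_lt_one 1).ne
    (tendsto_nhds_unique hsub (tendsto_volume_sum_cos_rearranged_le φ))

/-- Below the Hadamard gap condition, the permutation-invariant CLT can fail:
for any positive sequence `ε_k → 0` there exist a sequence `(n_k)` of positive
integers with `n_{k+1}/n_k ≥ 1 + ε_k` for `k ≥ k₀` and a permutation `σ` such
that the permuted central limit theorem fails. -/
theorem permuted_clt_fails_below_hadamard
    (ε : ℕ → ℝ) (hε : ∀ k, 0 < ε k) (hε0 : Tendsto ε atTop (𝓝 0)) :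
    ∃ (n : ℕ → ℕ) (k₀ : ℕ) (σ : Equiv.Perm ℕ),
      (∀ k, 0 < n k) ∧
      (∀ k ≥ k₀, (1 + ε k) * (n k : ℝ) ≤ (n (k + 1) : ℝ)) ∧
      ¬ (∀ t : ℝ,
          Tendsto
            (fun N : ℕ =>
              (volume {x ∈ Ioo (0 : ℝ) 1 |
                ∑ k ∈ Finset.range N, Real.cos (2 * π * (n (σ k) : ℝ) * x)
                  ≤ t * Real.sqrt ((N : ℝ) / 2)}).toReal)
            atTop
            (𝓝 ((Real.sqrt (2 * π))⁻¹ * ∫ u in Iic t, Real.exp (-u ^ 2 / 2)))) :=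
  permuted_clt_fails_below_hadamard_general ε hε0
end

section
/- Let (n_k) be an increasing sequence of positive integers such that all ratios n_{k+1}/n_k are integers and ∑_{k=1}^∞ n_k/n_{k+1} = ∞. Then there exists no sequence (g_k) of independent identically distributed functions on [0,1] such that λ{x : |cos(2π n_k x) − g_k(x)| ≥ ε_k} ≤ ε_k for all k with some sequence (ε_k) satisfying ∑_{k=1}^∞ ε_k < ∞. -/
/-!
Pick `j` with `ε_j + ε_{j+1}` much smaller than `a = n_j / n_{j+1} = 1 / q`; it exists because
`∑ ε_k < ∞ = ∑ n_k / n_{k+1}`. Since `x ↦ cos (2π N x)` has the same law on `[0, 1]` for every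
`N ≥ 1`, the event `A = {|g_j| < a/32 + ε_j}` has probability `≳ a` and the event
`B = {||g_{j+1}| - |cos (qπ/2)|| > 1/4 - ε_{j+1}}` has probability `≳ 1`. On the other hand
`||cos (qθ)| - |cos (qπ/2)|| ≤ q |cos θ|`, so outside the two exceptional sets of the
approximation, `A` forces the complement of `B`. By independence
`P(A) P(B) = P(A ∩ B) ≤ ε_j + ε_{j+1}`, which contradicts the choice of `j`.
-/

open MeasureTheory Set Real ProbabilityTheory Function

local notation "μ₀" => (volume.restrict (Icc (0 : ℝ) 1))

theorem abs_sin_nat_mul_le (n : ℕ) (x : ℝ) : |sin (n * x)| ≤ n * |sin x| := by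
  induction n with
  | zero => simp
  | succ n ih =>
    calc |sin ((n + 1 : ℕ) * x)| = |sin (n * x) * cos x + cos (n * x) * sin x| := by
          push_cast; rw [add_mul, one_mul, sin_add]
      _ ≤ |sin (n * x)| * |cos x| + |cos (n * x)| * |sin x| := by
          rw [← abs_mul, ← abs_mul]; exact abs_add_le _ _
      _ ≤ |sin (n * x)| * 1 + 1 * |sin x| := by
          gcongr
          exacts [abs_cos_le_one x, abs_cos_le_one _]
      _ ≤ (n + 1 : ℕ) * |sin x| := by push_cast; linarith

theorem sq_sub_le_abs_sq_sub_sq {a b : ℝ} (ha : 0 ≤ a) (hb : 0 ≤ b) :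
    (a - b) ^ 2 ≤ |a ^ 2 - b ^ 2| := by
  rw [sq_sub_sq, abs_mul, sq, ← abs_mul_abs_self (a - b), abs_of_nonneg (add_nonneg ha hb)]
  gcongr
  exact (abs_sub _ _).trans (by rw [abs_of_nonneg ha, abs_of_nonneg hb])

theorem cos_nat_mul_sq_sub_cos_nat_mul_pi_div_two_sq (q : ℕ) (φ : ℝ) :
    cos (q * (φ + π / 2)) ^ 2 - cos (q * (π / 2)) ^ 2 = -cos (q * π) * sin (q * φ) ^ 2 := by
  have h0 : sin (q * (π / 2)) * cos (q * (π / 2)) = 0 := by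
    have := sin_two_mul (q * (π / 2))
    rw [show 2 * (q * (π / 2)) = q * π by ring, sin_nat_mul_pi] at this
    linarith
  have hπ : cos (q * π) = 2 * cos (q * (π / 2)) ^ 2 - 1 := by
    rw [← cos_two_mul]; ring_nf
  rw [hπ, mul_add, add_comm, cos_add]
  linear_combination cos (q * (π / 2)) ^ 2 * sin_sq_add_cos_sq (q * φ)
    - 2 * cos (q * φ) * sin (q * φ) * h0 + sin (q * φ) ^ 2 * sin_sq_add_cos_sq (q * (π / 2))

theorem abs_abs_cos_nat_mul_sub_le (q : ℕ) (θ : ℝ) :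
    |(|cos (q * θ)| - |cos (q * (π / 2))|)| ≤ q * |cos θ| := by
  set φ := θ - π / 2
  have hθ : θ = φ + π / 2 := by ring
  have : (|cos (q * θ)| - |cos (q * (π / 2))|) ^ 2 ≤ (q * |cos θ|) ^ 2 :=
    calc (|cos (q * θ)| - |cos (q * (π / 2))|) ^ 2
        ≤ |cos (q * θ) ^ 2 - cos (q * (π / 2)) ^ 2| := by
          simpa only [sq_abs] using sq_sub_le_abs_sq_sub_sq (abs_nonneg _) (abs_nonneg _)
      _ ≤ sin (q * φ) ^ 2 := by
          rw [hθ, cos_nat_mul_sq_sub_cos_nat_mul_pi_div_two_sq, abs_mul, abs_neg, abs_sq]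
          exact mul_le_of_le_one_left (sq_nonneg _) (abs_cos_le_one _)
      _ ≤ (q * |cos θ|) ^ 2 := by
          rw [hθ, cos_add_pi_div_two, abs_neg, ← sq_abs]
          gcongr
          exact abs_sin_nat_mul_le q φ
  simpa [abs_of_nonneg (by positivity : 0 ≤ (q : ℝ) * |cos θ|)] using sq_le_sq.mp this

theorem abs_cos_two_pi_mul_le (x : ℝ) : |cos (2 * π * x)| ≤ 2 * π * |x - 1 / 4| := by
  calc |cos (2 * π * x)| = |cos (2 * π * x) - cos (π / 2)| := by rw [cos_pi_div_two, sub_zero]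
    _ ≤ |2 * π * x - π / 2| := abs_cos_sub_cos_le _ _
    _ = 2 * π * |x - 1 / 4| := by
      rw [show 2 * π * x - π / 2 = 2 * π * (x - 1 / 4) by ring, abs_mul,
        abs_of_pos two_pi_pos]

theorem one_sub_le_abs_cos_two_pi_mul (x : ℝ) : 1 - 2 * π * |x| ≤ |cos (2 * π * x)| := by
  have := abs_cos_sub_cos_le (2 * π * x) 0
  rw [cos_zero, sub_zero, abs_mul, abs_of_pos two_pi_pos] at this
  linarith [le_abs_self (cos (2 * π * x)), neg_abs_le (cos (2 * π * x) - 1)]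

theorem measureReal_restrict_le_of_volume_sep_le {α : Type*} [MeasurableSpace α]
    {μ : Measure α} {s : Set α} (hs : MeasurableSet s) {p : α → Prop} {ε : ℝ} (hε : 0 ≤ ε)
    (h : μ {x ∈ s | p x} ≤ ENNReal.ofReal ε) : (μ.restrict s).real {x | p x} ≤ ε := by
  rw [measureReal_restrict_apply' hs, inter_comm]
  exact ENNReal.toReal_le_of_le_ofReal hε h

theorem measureReal_preimage_le_add {Ω : Type*} [MeasurableSpace Ω] {μ : Measure Ω}
    [IsFiniteMeasure μ] {f g : Ω → ℝ} {ε : ℝ} {S T : Set ℝ}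
    (hST : ∀ y ∈ S, ∀ z, |y - z| < ε → z ∈ T) :
    μ.real (f ⁻¹' S) ≤ μ.real (g ⁻¹' T) + μ.real {x | ε ≤ |f x - g x|} := by
  refine (measureReal_mono fun x hx => ?_).trans (measureReal_union_le _ _)
  by_cases hx' : ε ≤ |f x - g x|
  · exact Or.inr hx'
  · exact Or.inl (hST _ hx _ (not_le.mp hx'))

theorem exists_le_of_summable_of_not_summable {a b : ℕ → ℝ} (hb : Summable b)
    (ha : ¬Summable a) (ha₀ : ∀ k, 0 ≤ a k) : ∃ k, b k ≤ a k := by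
  by_contra! h
  exact ha (hb.of_nonneg_of_le ha₀ fun k => (h k).le)

theorem identDistrib_comp_nat_mul {f : ℝ → ℝ} (hf : Continuous f) (hper : Periodic f 1)
    {N : ℕ} (hN : N ≠ 0) : IdentDistrib (fun x => f (N * x)) f μ₀ μ₀ := by
  rw [← Measure.restrict_congr_set Ioc_ae_eq_Icc]
  have hF : Continuous hper.lift := continuous_coinduced_dom.mpr hf
  have hmk := UnitAddCircle.measurePreserving_mk 0
  rw [zero_add] at hmk
  have hmul := Measure.MeasurePreserving.zsmul _ (Int.natCast_ne_zero.mpr hN) hmk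
  refine ⟨by fun_prop, hf.aemeasurable, ?_⟩
  have h₁ := congrArg (Measure.map hper.lift) hmul.map_eq
  have h₂ := congrArg (Measure.map hper.lift) hmk.map_eq
  rw [Measure.map_map hF.measurable hmul.measurable] at h₁
  rw [Measure.map_map hF.measurable hmk.measurable] at h₂
  convert h₁.trans h₂.symm using 2 <;> ext x
  · simp only [comp_apply, natCast_zsmul, ← QuotientAddGroup.mk_nsmul, nsmul_eq_mul,
      Periodic.lift_coe]
  · rfl

theorem measureReal_cos_nat_mul_preimage {N : ℕ} (hN : N ≠ 0) {S : Set ℝ}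
    (hS : MeasurableSet S) :
    Measure.real μ₀ ((fun x => cos (2 * π * N * x)) ⁻¹' S) =
      Measure.real μ₀ ((fun x => cos (2 * π * x)) ⁻¹' S) := by
  have hper : Periodic (fun x => cos (2 * π * x)) 1 := fun x => by
    simp only [mul_add, mul_one, cos_add_two_pi]
  have := (identDistrib_comp_nat_mul (by fun_prop) hper hN).measure_mem_eq hS
  simp only [mul_assoc] at this ⊢
  exact congrArg ENNReal.toReal this

theorem sub_le_measureReal_restrict_Icc {c d : ℝ} {S : Set ℝ} (hc : 0 ≤ c) (hcd : c ≤ d)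
    (hd : d ≤ 1) (hS : Icc c d ⊆ S) : d - c ≤ Measure.real μ₀ S :=
  calc d - c = Measure.real μ₀ (Icc c d) := by
        rw [measureReal_restrict_apply' measurableSet_Icc,
          inter_eq_left.mpr (Icc_subset_Icc hc hd), volume_real_Icc_of_le hcd]
    _ ≤ Measure.real μ₀ S := measureReal_mono hS

theorem le_measureReal_abs_cos_lt {t : ℝ} (ht : 0 < t) (ht1 : t ≤ 1) :
    t / 16 ≤ Measure.real μ₀ {x | |cos (2 * π * x)| < t} := by
  have h := sub_le_measureReal_restrict_Icc (c := 1 / 4) (d := 1 / 4 + t / 16)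
    (S := {x | |cos (2 * π * x)| < t}) (by norm_num) (by linarith) (by linarith) ?_
  · linarith
  intro x ⟨hx₁, hx₂⟩
  calc |cos (2 * π * x)| ≤ 2 * π * |x - 1 / 4| := abs_cos_two_pi_mul_le x
    _ ≤ 2 * π * (t / 16) := by
      gcongr
      rw [abs_of_nonneg (by linarith)]
      linarith
    _ < t := by nlinarith [pi_lt_four]

theorem le_measureReal_le_abs_abs_cos_sub (u : ℝ) :
    1 / 32 ≤ Measure.real μ₀ {x | 1 / 4 ≤ |(|cos (2 * π * x)| - u)|} := by
  have hπ := pi_lt_four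
  rcases le_total u (1 / 2) with hu | hu
  · have h := sub_le_measureReal_restrict_Icc (c := 0) (d := 1 / 32)
      (S := {x | 1 / 4 ≤ |(|cos (2 * π * x)| - u)|}) le_rfl (by norm_num) (by norm_num) ?_
    · linarith
    intro x ⟨hx₀, hx₁⟩
    have := one_sub_le_abs_cos_two_pi_mul x
    rw [abs_of_nonneg hx₀] at this
    rw [mem_ofPred_eq, le_abs]
    left; nlinarith
  · have h := sub_le_measureReal_restrict_Icc (c := 1 / 4) (d := 1 / 4 + 1 / 32)
      (S := {x | 1 / 4 ≤ |(|cos (2 * π * x)| - u)|}) (by norm_num) (by norm_num) (by norm_num) ?_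
    · linarith
    intro x ⟨hx₀, hx₁⟩
    have := abs_cos_two_pi_mul_le x
    rw [abs_of_nonneg (by linarith : 0 ≤ x - 1 / 4)] at this
    rw [mem_ofPred_eq, le_abs]
    right; nlinarith

theorem le_measureReal_abs_lt_of_approx {N : ℕ} (hN : N ≠ 0) {g : ℝ → ℝ} {ε t : ℝ}
    (ht : 0 < t) (ht1 : t ≤ 1)
    (hD : Measure.real μ₀ {x | ε ≤ |cos (2 * π * N * x) - g x|} ≤ ε) :
    t / 16 - ε ≤ Measure.real μ₀ (g ⁻¹' {y | |y| < t + ε}) := by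
  have h := measureReal_preimage_le_add (μ := μ₀) (ε := ε) (f := fun x => cos (2 * π * N * x))
    (S := {y | |y| < t}) (T := {y | |y| < t + ε}) (g := g) fun y hy z hyz => by
      simp only [mem_ofPred_eq] at hy ⊢
      linarith [abs_sub_abs_le_abs_sub z y, abs_sub_comm y z]
  rw [measureReal_cos_nat_mul_preimage hN
    (measurableSet_lt measurable_abs measurable_const), preimage_ofPred_eq] at h
  linarith [le_measureReal_abs_cos_lt ht ht1]

theorem le_measureReal_abs_abs_sub_of_approx {N : ℕ} (hN : N ≠ 0) {g : ℝ → ℝ} {ε : ℝ}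
    (u : ℝ) (hD : Measure.real μ₀ {x | ε ≤ |cos (2 * π * N * x) - g x|} ≤ ε) :
    1 / 32 - ε ≤ Measure.real μ₀ (g ⁻¹' {y | 1 / 4 - ε < |(|y| - u)|}) := by
  have h := measureReal_preimage_le_add (μ := μ₀) (ε := ε) (f := fun x => cos (2 * π * N * x))
    (S := {y | 1 / 4 ≤ |(|y| - u)|}) (T := {y | 1 / 4 - ε < |(|y| - u)|}) (g := g)
    fun y hy z hyz => by
      simp only [mem_ofPred_eq] at hy ⊢
      have := abs_sub_abs_le_abs_sub (|y| - u) (|z| - u)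
      rw [sub_sub_sub_cancel_right] at this
      linarith [abs_abs_sub_abs_le_abs_sub y z]
  rw [measureReal_cos_nat_mul_preimage hN
    (measurableSet_le measurable_const (by fun_prop)), preimage_ofPred_eq] at h
  linarith [le_measureReal_le_abs_abs_cos_sub u]

theorem preimage_inter_preimage_subset_union {N q : ℕ} {g₁ g₂ : ℝ → ℝ} {ε₁ ε₂ t r : ℝ}
    (h : q * (t + 2 * ε₁) + 2 * ε₂ ≤ r) :
    g₁ ⁻¹' {y | |y| < t + ε₁} ∩ g₂ ⁻¹' {y | r - ε₂ < |(|y| - |cos (q * (π / 2))|)|} ⊆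
      {x | ε₁ ≤ |cos (2 * π * N * x) - g₁ x|} ∪
        {x | ε₂ ≤ |cos (2 * π * ((N * q : ℕ) : ℝ) * x) - g₂ x|} := by
  rintro x ⟨hx₁, hx₂⟩
  by_contra! hx
  simp only [mem_union, mem_ofPred_eq, not_or, not_le] at hx
  simp only [mem_preimage, mem_ofPred_eq] at hx₁ hx₂
  have htrig := abs_abs_cos_nat_mul_sub_le q (2 * π * N * x)
  rw [show (q : ℝ) * (2 * π * N * x) = 2 * π * ((N * q : ℕ) : ℝ) * x by push_cast; ring] at htrig
  set c₁ := cos (2 * π * N * x)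
  set c₂ := cos (2 * π * ((N * q : ℕ) : ℝ) * x)
  have hc₁ : q * |c₁| ≤ q * (t + 2 * ε₁) := by
    gcongr
    linarith [abs_sub_abs_le_abs_sub c₁ (g₁ x)]
  have h₂ := abs_sub_abs_le_abs_sub (|g₂ x| - |cos (q * (π / 2))|) (|c₂| - |cos (q * (π / 2))|)
  rw [sub_sub_sub_cancel_right] at h₂
  linarith [abs_abs_sub_abs_le_abs_sub (g₂ x) c₂, abs_sub_comm (g₂ x) c₂]

theorem inv_lt_of_indepFun_of_approx {N q : ℕ} (hN : N ≠ 0) (hq : q ≠ 0) {g₁ g₂ : ℝ → ℝ}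
    (hind : IndepFun g₁ g₂ μ₀) {ε₁ ε₂ : ℝ} (hε₁ : 0 ≤ ε₁) (hε₂ : 0 ≤ ε₂)
    (h₁ : volume {x ∈ Icc (0 : ℝ) 1 | ε₁ ≤ |cos (2 * π * N * x) - g₁ x|} ≤ ENNReal.ofReal ε₁)
    (h₂ : volume {x ∈ Icc (0 : ℝ) 1 | ε₂ ≤ |cos (2 * π * ((N * q : ℕ) : ℝ) * x) - g₂ x|}
      ≤ ENNReal.ofReal ε₂) :
    (q : ℝ)⁻¹ < 10 ^ 5 * (ε₁ + ε₂) := by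
  by_contra! hsmall
  set a := (q : ℝ)⁻¹
  have hq₀ : (0 : ℝ) < q := Nat.cast_pos.mpr (Nat.pos_of_ne_zero hq)
  have hqa : q * a = 1 := mul_inv_cancel₀ hq₀.ne'
  have ha : a ≤ 1 := inv_le_one_of_one_le₀ (Nat.one_le_cast.mpr (Nat.pos_of_ne_zero hq))
  have hqε₁ : q * ε₁ ≤ 1 / 10 ^ 5 :=
    calc q * ε₁ ≤ q * (a / 10 ^ 5) := by gcongr; linarith
      _ = 1 / 10 ^ 5 := by rw [mul_div_assoc', hqa]
  have hD₁ := measureReal_restrict_le_of_volume_sep_le measurableSet_Icc hε₁ h₁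
  have hD₂ := measureReal_restrict_le_of_volume_sep_le measurableSet_Icc hε₂ h₂
  set A := g₁ ⁻¹' {y | |y| < a / 32 + ε₁}
  set B := g₂ ⁻¹' {y | 1 / 4 - ε₂ < |(|y| - |cos (q * (π / 2))|)|}
  have hA : a / 32 / 16 - ε₁ ≤ Measure.real μ₀ A :=
    le_measureReal_abs_lt_of_approx hN (by positivity) (by linarith) hD₁
  have hB : 1 / 32 - ε₂ ≤ Measure.real μ₀ B :=
    le_measureReal_abs_abs_sub_of_approx (Nat.cast_ne_zero.mpr (mul_ne_zero hN hq)) _ hD₂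
  have hAB : Measure.real μ₀ (A ∩ B) ≤ ε₁ + ε₂ := by
    have hqt : (q : ℝ) * (a / 32 + 2 * ε₁) = 1 / 32 + 2 * (q * ε₁) := by
      linear_combination hqa / 32
    refine (measureReal_mono (preimage_inter_preimage_subset_union (N := N) ?_)).trans
      ((measureReal_union_le _ _).trans (add_le_add hD₁ hD₂))
    linarith
  have hmul : Measure.real μ₀ (A ∩ B) = Measure.real μ₀ A * Measure.real μ₀ B := by
    rw [measureReal_def, hind.measure_inter_preimage_eq_mul _ _
      (measurableSet_lt measurable_abs measurable_const)
      (measurableSet_lt measurable_const (by fun_prop)), ENNReal.toReal_mul]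
    rfl
  have hprod : (a / 512 - (ε₁ + ε₂)) * (1 / 32 - (ε₁ + ε₂)) ≤ ε₁ + ε₂ :=
    calc (a / 512 - (ε₁ + ε₂)) * (1 / 32 - (ε₁ + ε₂))
        ≤ Measure.real μ₀ A * Measure.real μ₀ B :=
          mul_le_mul (by linarith) (by linarith) (by linarith) measureReal_nonneg
      _ ≤ ε₁ + ε₂ := hmul ▸ hAB
  nlinarith [mul_le_mul_of_nonneg_right ha (add_nonneg hε₁ hε₂), sq_nonneg (ε₁ + ε₂),
    inv_pos.mpr hq₀]

theorem no_iid_approximation_general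
    (n : ℕ → ℕ) (hpos : ∀ k, 0 < n k)
    (hdvd : ∀ k, n k ∣ n (k + 1))
    (hdiv : ¬ Summable fun k => (n k : ℝ) / (n (k + 1) : ℝ)) :
    ¬ ∃ (g : ℕ → ℝ → ℝ) (ε : ℕ → ℝ),
        (∀ k, Measurable (g k)) ∧
        (∀ k, 0 ≤ ε k) ∧
        Summable ε ∧
        iIndepFun g (volume.restrict (Icc (0 : ℝ) 1)) ∧
        (∀ k, IdentDistrib (g k) (g 0)
          (volume.restrict (Icc (0 : ℝ) 1)) (volume.restrict (Icc (0 : ℝ) 1))) ∧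
        (∀ k, volume {x ∈ Icc (0 : ℝ) 1 |
            ε k ≤ |Real.cos (2 * π * (n k : ℝ) * x) - g k x|} ≤ ENNReal.ofReal (ε k)) := by
  rintro ⟨g, ε, -, hε, hεsum, hindep, -, happrox⟩
  obtain ⟨j, hj⟩ := exists_le_of_summable_of_not_summable
    (((summable_nat_add_iff 1).mpr hεsum).add hεsum |>.mul_left (10 ^ 5)) hdiv
    fun k => by positivity
  obtain ⟨q, hq⟩ := hdvd j
  have hq₀ : q ≠ 0 := by
    rintro rfl
    exact (hpos (j + 1)).ne' (by simpa using hq)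
  have key := inv_lt_of_indepFun_of_approx (hpos j).ne' hq₀
    (hindep.indepFun (Nat.succ_ne_self j).symm) (hε j) (hε (j + 1)) (happrox j)
    (by simpa only [hq] using happrox (j + 1))
  have hratio : (n j : ℝ) / n (j + 1) = (q : ℝ)⁻¹ := by
    rw [hq, Nat.cast_mul, div_mul_cancel_left₀ (Nat.cast_ne_zero.mpr (hpos j).ne')]
  linarith

/-- **Optimality of the i.i.d. approximation rate.** If `(n_k)` is an increasing
sequence of positive integers whose consecutive ratios are integers and
`∑ n_k/n_{k+1} = ∞`, then there is no i.i.d. sequence `(g_k)` on `[0,1]` with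
`λ{x : |cos(2π n_k x) − g_k(x)| ≥ ε_k} ≤ ε_k` for a summable sequence `(ε_k)`. -/
theorem no_iid_approximation
    (n : ℕ → ℕ) (hpos : ∀ k, 0 < n k) (hmono : StrictMono n)
    (hdvd : ∀ k, n k ∣ n (k + 1))
    (hdiv : ¬ Summable fun k => (n k : ℝ) / (n (k + 1) : ℝ)) :
    ¬ ∃ (g : ℕ → ℝ → ℝ) (ε : ℕ → ℝ),
        (∀ k, Measurable (g k)) ∧
        (∀ k, 0 ≤ ε k) ∧
        Summable ε ∧
        iIndepFun g (volume.restrict (Icc (0 : ℝ) 1)) ∧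
        (∀ k, IdentDistrib (g k) (g 0)
          (volume.restrict (Icc (0 : ℝ) 1)) (volume.restrict (Icc (0 : ℝ) 1))) ∧
        (∀ k, volume {x ∈ Icc (0 : ℝ) 1 |
            ε k ≤ |Real.cos (2 * π * (n k : ℝ) * x) - g k x|} ≤ ENNReal.ofReal (ε k)) :=
  no_iid_approximation_general n hpos hdvd hdiv
end

section
/- If an increasing sequence (n_k) of positive integers satisfies condition A_p for all p ≥ 2 (uniformly bounded numbers of nondegenerate solutions of a_1 n_{k_1} + … + a_p n_{k_p} = b for each fixed p and nonzero coefficients), then (n_k) cannot grow polynomially; that is, there is no constant d such that n_k ≤ k^d for all sufficiently large k. -/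
open Set Filter

/-- Condition **Aₚ**: there is a constant `C_p ≥ 1` such that for every nonzero
integer `b` and all nonzero integers `a_1, …, a_p`, the number of nondegenerate
solutions `k_1 < … < k_p` of `a_1 n_{k_1} + … + a_p n_{k_p} = b` is at most
`C_p` (a solution is nondegenerate if no proper nonempty subsum vanishes). -/
def CondAp (n : ℕ → ℕ) (p : ℕ) : Prop :=
  ∃ C : ℕ, 1 ≤ C ∧ ∀ (a : Fin p → ℤ) (b : ℤ), b ≠ 0 → (∀ i, a i ≠ 0) →
    {k : Fin p → ℕ | StrictMono k ∧ (∑ i, a i * (n (k i) : ℤ)) = b ∧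
      ∀ s : Finset (Fin p), s.Nonempty → s ≠ Finset.univ →
        ∑ i ∈ s, a i * (n (k i) : ℤ) ≠ 0}.Finite ∧
    {k : Fin p → ℕ | StrictMono k ∧ (∑ i, a i * (n (k i) : ℤ)) = b ∧
      ∀ s : Finset (Fin p), s.Nonempty → s ≠ Finset.univ →
        ∑ i ∈ s, a i * (n (k i) : ℤ) ≠ 0}.ncard ≤ C

/-- An increasing sequence of positive integers satisfying condition `Aₚ` for
all `p ≥ 2` cannot grow polynomially: there is no exponent `d` with
`n_k ≤ k^d` for all sufficiently large `k`. -/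
theorem Ap_no_polynomial_growth
    (n : ℕ → ℕ) (hpos : ∀ k, 0 < n k) (hmono : StrictMono n)
    (hAp : ∀ p : ℕ, 2 ≤ p → CondAp n p) :
    ¬ ∃ (d : ℕ) (k₀ : ℕ), ∀ k ≥ k₀, n k ≤ k ^ d := by
  rintro ⟨d, k₀, hgrow⟩
  set p : ℕ := d + 2 with hp
  obtain ⟨C, hC1, hC⟩ := hAp p (by omega)
  set N : ℕ := max (2 * p) (max (k₀ + 1) (2 ^ p * p.factorial * C * p + 1)) with hNdef
  have hN2p : 2 * p ≤ N := le_max_left _ _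
  have hNk0 : k₀ + 1 ≤ N := le_trans (le_max_left _ _) (le_max_right _ _)
  have hNbig : 2 ^ p * p.factorial * C * p + 1 ≤ N :=
    le_trans (le_max_right _ _) (le_max_right _ _)
  have hNpos : 0 < N := by omega
  have hbound : ∀ k < N, n k ≤ N ^ d := by
    intro k hk
    rcases le_or_gt k₀ k with h | h
    · exact le_trans (hgrow k h) (Nat.pow_le_pow_left hk.le d)
    · exact le_trans (le_trans (hmono.monotone h.le) (hgrow k₀ le_rfl))
        (Nat.pow_le_pow_left (by omega) d)
  set S : Finset (Finset ℕ) := (Finset.range N).powersetCard p with hSdef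
  set f : Finset ℕ → ℕ := fun s => ∑ k ∈ s, n k with hfdef
  set g : Finset ℕ → (Fin p → ℕ) :=
    fun s => if h : s.card = p then s.orderEmbOfFin h else fun _ => 0 with hgdef
  have hgsum : ∀ (s : Finset ℕ) (h : s.card = p),
      ∑ i : Fin p, (n (g s i) : ℤ) = (f s : ℤ) := by
    intro s h
    have hg : g s = s.orderEmbOfFin h := dif_pos h
    rw [hg]
    have : ∑ i : Fin p, (n (s.orderEmbOfFin h i) : ℤ) = ∑ x : s, (n x : ℤ) :=
      Fintype.sum_bijective (s.orderIsoOfFin h) (s.orderIsoOfFin h).bijective _ _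
        (fun i => by rw [Finset.coe_orderIsoOfFin_apply])
    rw [this, Finset.sum_coe_sort s (fun x => (n x : ℤ))]
    push_cast [hfdef]
    ring
  have hfib : ∀ b ∈ S.image f, (S.filter fun s => f s = b).card ≤ C := by
    intro b hb
    obtain ⟨s₀, hs₀S, hs₀b⟩ := Finset.mem_image.mp hb
    obtain ⟨hs₀sub, hs₀card⟩ := Finset.mem_powersetCard.mp hs₀S
    have hbpos : 0 < b := by
      have h1 : s₀.card • 1 ≤ f s₀ := Finset.card_nsmul_le_sum s₀ n 1 (fun k _ => hpos k)
      simp [hs₀card, hs₀b] at h1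
      omega
    obtain ⟨hfin, hcard⟩ := hC (fun _ => 1) (b : ℤ) (by exact_mod_cast hbpos.ne')
      (fun _ => one_ne_zero)
    have hmaps : ∀ s ∈ S.filter fun s => f s = b, g s ∈ hfin.toFinset := by
      intro s hs
      obtain ⟨hsS, hsb⟩ := Finset.mem_filter.mp hs
      obtain ⟨hssub, hscard⟩ := Finset.mem_powersetCard.mp hsS
      have hg : g s = s.orderEmbOfFin hscard := dif_pos hscard
      rw [Set.Finite.mem_toFinset]
      refine ⟨?_, ?_, ?_⟩
      · rw [hg]; exact (s.orderEmbOfFin hscard).strictMono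
      · simp only [one_mul]
        rw [hgsum s hscard, hsb]
      · intro t ht _
        have : (0 : ℤ) < ∑ i ∈ t, (1 : ℤ) * (n (g s i) : ℤ) := by
          apply Finset.sum_pos _ ht
          intro i _
          have := hpos (g s i)
          positivity
        exact this.ne'
    have hinj : Set.InjOn g (S.filter fun s => f s = b) := by
      intro s hs t ht hst
      obtain ⟨hsS, _⟩ := Finset.mem_filter.mp hs
      obtain ⟨htS, _⟩ := Finset.mem_filter.mp ht
      obtain ⟨_, hscard⟩ := Finset.mem_powersetCard.mp hsS
      obtain ⟨_, htcard⟩ := Finset.mem_powersetCard.mp htS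
      have hgs : g s = s.orderEmbOfFin hscard := dif_pos hscard
      have hgt : g t = t.orderEmbOfFin htcard := dif_pos htcard
      apply Finset.coe_injective
      rw [← Finset.range_orderEmbOfFin s hscard, ← Finset.range_orderEmbOfFin t htcard]
      rw [← hgs, ← hgt, hst]
    calc (S.filter fun s => f s = b).card ≤ hfin.toFinset.card :=
          Finset.card_le_card_of_injOn g hmaps hinj
      _ ≤ C := by rwa [← Set.ncard_eq_toFinset_card _ hfin]
  have hmain : S.card ≤ C * (S.image f).card := Finset.card_le_mul_card_image S C hfib
  have himg : S.image f ⊆ Finset.Icc 1 (p * N ^ d) := by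
    intro b hb
    obtain ⟨s, hsS, hsb⟩ := Finset.mem_image.mp hb
    obtain ⟨hssub, hscard⟩ := Finset.mem_powersetCard.mp hsS
    rw [Finset.mem_Icc]
    constructor
    · have h1 : s.card • 1 ≤ f s := Finset.card_nsmul_le_sum s n 1 (fun k _ => hpos k)
      simp [hscard] at h1
      omega
    · have h2 : f s ≤ s.card • N ^ d := by
        apply Finset.sum_le_card_nsmul
        intro k hk
        exact hbound k (Finset.mem_range.mp (hssub hk))
      rw [hscard, smul_eq_mul] at h2
      omega
  have hScard : S.card = N.choose p := by
    rw [hSdef, Finset.card_powersetCard, Finset.card_range]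
  have hupper : N.choose p ≤ C * (p * N ^ d) := by
    calc N.choose p = S.card := hScard.symm
      _ ≤ C * (S.image f).card := hmain
      _ ≤ C * (Finset.Icc 1 (p * N ^ d)).card := by
          exact Nat.mul_le_mul_left C (Finset.card_le_card himg)
      _ = C * (p * N ^ d) := by rw [Nat.card_Icc, Nat.add_sub_cancel]
  -- lower bound on the binomial coefficient
  have hdesc : (N + 1 - p) ^ p ≤ p.factorial * N.choose p := by
    have := Nat.pow_sub_le_descFactorial N p
    rwa [Nat.descFactorial_eq_factorial_mul_choose] at this
  have hhalf : N ≤ 2 * (N + 1 - p) := by omega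
  have hNp : N ^ p ≤ 2 ^ p * (N + 1 - p) ^ p := by
    calc N ^ p ≤ (2 * (N + 1 - p)) ^ p := Nat.pow_le_pow_left hhalf p
      _ = 2 ^ p * (N + 1 - p) ^ p := by rw [mul_pow]
  have hNsq : 2 ^ p * p.factorial * C * p < N ^ 2 := by
    calc 2 ^ p * p.factorial * C * p < N := by omega
      _ ≤ N * N := Nat.le_mul_of_pos_left N hNpos
      _ = N ^ 2 := (sq N).symm
  have hkey : 2 ^ p * (p.factorial * (C * (p * N ^ d))) < 2 ^ p * ((N + 1 - p) ^ p) := by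
    calc 2 ^ p * (p.factorial * (C * (p * N ^ d)))
        = (2 ^ p * p.factorial * C * p) * N ^ d := by ring
      _ < N ^ 2 * N ^ d := by
          apply Nat.mul_lt_mul_of_lt_of_le hNsq le_rfl
          positivity
      _ = N ^ (2 + d) := by rw [← pow_add]
      _ = N ^ p := by congr 1; omega
      _ ≤ 2 ^ p * (N + 1 - p) ^ p := hNp
  have hkey2 : p.factorial * (C * (p * N ^ d)) < (N + 1 - p) ^ p :=
    Nat.lt_of_mul_lt_mul_left hkey
  have : p.factorial * (C * (p * N ^ d)) < p.factorial * N.choose p :=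
    lt_of_lt_of_le hkey2 hdesc
  have hlt : C * (p * N ^ d) < N.choose p :=
    Nat.lt_of_mul_lt_mul_left this
  omega
end
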